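/- arXiv:1904.05000 — 2 statements merged into one kernel-verified Lean document; each statement's English description precedes it below -/
import Mathlib

section
/- Let φ(a_1, a_2) be a homogeneous polynomial of degree d = m_{1,2} + m_{1,3} + m_{2,3} − 2 satisfying ∂_2^{m_{2,3}} φ = 0 and (∂_1 − ∂_2)^{m_{1,2}} ∂_1^{m_{1,3}} φ = 0, where m_{1,2}, m_{1,3}, m_{2,3} are positive integers. Then the space of such φ is one-dimensional: φ is uniquely determined up to a scalar multiple. -/
open MvPolynomial

namespace RankTwoAux

noncomputable section

abbrev R2 := MvPolynomial (Fin 2) ℝ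

def L0 : R2 →ₗ[ℝ] R2 := (pderiv 0).toLinearMap
def L1 : R2 →ₗ[ℝ] R2 := (pderiv 1).toLinearMap
def LF : R2 →ₗ[ℝ] R2 := L0 - L1

lemma iter0_eq (k : ℕ) (p : R2) : (fun p : R2 => pderiv 0 p)^[k] p = (L0^k) p := by
  rw [Module.End.pow_apply]; rfl

lemma iter1_eq (k : ℕ) (p : R2) : (fun p : R2 => pderiv 1 p)^[k] p = (L1^k) p := by
  rw [Module.End.pow_apply]; rfl

lemma iterF_eq (k : ℕ) (p : R2) :
    (fun p : R2 => pderiv 0 p - pderiv 1 p)^[k] p = (LF^k) p := by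
  rw [Module.End.pow_apply]; rfl

-- coeff of pderiv
lemma coeff_pderiv (i : Fin 2) (f : R2) (m : Fin 2 →₀ ℕ) :
    coeff m (pderiv i f) = (m i + 1) * coeff (m + Finsupp.single i 1) f := by
  induction f using MvPolynomial.induction_on' with
  | monomial s a =>
    rw [pderiv_monomial, coeff_monomial, coeff_monomial]
    by_cases h : s i = 0
    · have h1 : s - Finsupp.single i 1 = s := by
        ext j; by_cases hj : j = i
        · simp [hj, h]
        · have : ¬ i = j := fun he => hj he.symm
          simp [Finsupp.single_apply, this]
      have h2 : s ≠ m + Finsupp.single i 1 := by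
        intro he; apply absurd h; rw [he]; simp
      rw [h1]
      split_ifs with h3
      · subst h3; simp [h2, h]
      · simp [h2]
    · have hle : Finsupp.single i 1 ≤ s := Finsupp.single_le_iff.mpr (by omega)
      have key : s - Finsupp.single i 1 = m ↔ s = m + Finsupp.single i 1 :=
        tsub_eq_iff_eq_add_of_le hle
      simp only [key]
      split_ifs with h3
      · subst h3; simp; ring
      · ring
  | add p q hp hq => simp [hp, hq, mul_add]


lemma LF_apply (p : R2) : LF p = pderiv 0 p - pderiv 1 p := rfl

lemma weight_one_single (i : Fin 2) (n : ℕ) :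
    (Finsupp.weight (1 : Fin 2 → ℕ)) (Finsupp.single i n) = n := by
  rw [Finsupp.weight_apply, Finsupp.sum_single_index] <;> simp

lemma pd0_mulpow (a b : ℕ) :
    pderiv (0:Fin 2) ((X 0 ^ a * X 1 ^ b : R2)) = a • (X 0 ^ (a-1) * X 1 ^ b) := by
  have h10 : (1 : Fin 2) ≠ 0 := by decide
  simp [pderiv_mul, pderiv_pow, pderiv_X_self, pderiv_X_of_ne h10, nsmul_eq_mul]
  ring

lemma pd1_mulpow (a b : ℕ) :
    pderiv (1:Fin 2) ((X 0 ^ a * X 1 ^ b : R2)) = b • (X 0 ^ a * X 1 ^ (b-1)) := by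
  have h01 : (0 : Fin 2) ≠ 1 := by decide
  simp [pderiv_mul, pderiv_pow, pderiv_X_self, pderiv_X_of_ne h01, nsmul_eq_mul]
  ring

lemma iter_pd0 (k a b : ℕ) :
    (L0^k) (X 0 ^ a * X 1 ^ b : R2) = (a.descFactorial k) • (X 0 ^ (a-k) * X 1 ^ b) := by
  induction k with
  | zero => simp
  | succ k ih =>
    rw [pow_succ', Module.End.mul_apply, ih, map_nsmul]
    show (Nat.descFactorial a k) • (pderiv 0 _) = _
    rw [pd0_mulpow, smul_smul, Nat.descFactorial_succ, Nat.sub_sub, mul_comm]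

lemma iter_pd1 (k a b : ℕ) :
    (L1^k) (X 0 ^ a * X 1 ^ b : R2) = (b.descFactorial k) • (X 0 ^ a * X 1 ^ (b-k)) := by
  induction k with
  | zero => simp
  | succ k ih =>
    rw [pow_succ', Module.End.mul_apply, ih, map_nsmul]
    show (Nat.descFactorial b k) • (pderiv 1 _) = _
    rw [pd1_mulpow, smul_smul, Nat.descFactorial_succ, Nat.sub_sub, mul_comm]

lemma LF_mulpow (i r : ℕ) :
    LF (X 0 ^ i * (X 0 + X 1) ^ r : R2) = i • (X 0 ^ (i-1) * (X 0 + X 1) ^ r) := by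
  have h10 : (1 : Fin 2) ≠ 0 := by decide
  have h01 : (0 : Fin 2) ≠ 1 := by decide
  rw [LF_apply]
  simp [pderiv_mul, pderiv_pow, pderiv_X_self, pderiv_X_of_ne h10, pderiv_X_of_ne h01,
    nsmul_eq_mul]
  ring

lemma iter_LF (k i r : ℕ) :
    (LF^k) (X 0 ^ i * (X 0 + X 1) ^ r : R2)
      = (i.descFactorial k) • (X 0 ^ (i-k) * (X 0 + X 1) ^ r) := by
  induction k with
  | zero => simp
  | succ k ih =>
    rw [pow_succ', Module.End.mul_apply, ih, map_nsmul, LF_mulpow, smul_smul,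
      Nat.descFactorial_succ, Nat.sub_sub, mul_comm]

lemma fin2_eq (m : Fin 2 →₀ ℕ) : m = Finsupp.single 0 (m 0) + Finsupp.single 1 (m 1) := by
  ext j; fin_cases j <;> simp

lemma weight_one_eq (m : Fin 2 →₀ ℕ) :
    (Finsupp.weight (1 : Fin 2 → ℕ)) m = m 0 + m 1 := by
  conv_lhs => rw [fin2_eq m]
  rw [map_add, weight_one_single, weight_one_single]

lemma isHomog_pderiv {φ : R2} {n : ℕ} (h : φ.IsHomogeneous (n+1)) (i : Fin 2) :
    (pderiv i φ).IsHomogeneous n := by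
  intro d hd
  rw [coeff_pderiv] at hd
  have h2 : coeff (d + Finsupp.single i 1) φ ≠ 0 := by
    intro h0; rw [h0, mul_zero] at hd; exact hd rfl
  have h3 := h h2
  rw [map_add, weight_one_single] at h3
  omega

lemma coeff_zero_of_pd1 {ρ : R2} (hd : pderiv 1 ρ = 0) (m : Fin 2 →₀ ℕ) (hm : m 1 ≠ 0) :
    coeff m ρ = 0 := by
  have h1 : Finsupp.single (1 : Fin 2) 1 ≤ m := Finsupp.single_le_iff.mpr (by omega)
  have hme : m = (m - Finsupp.single 1 1) + Finsupp.single 1 1 := (tsub_add_cancel_of_le h1).symm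
  have hc := coeff_pderiv 1 ρ (m - Finsupp.single 1 1)
  rw [hd, coeff_zero] at hc
  have : coeff ((m - Finsupp.single 1 1) + Finsupp.single 1 1) ρ = 0 := by
    by_contra h0
    exact h0 (by
      have := hc.symm
      rcases mul_eq_zero.mp this with h | h
      · exact absurd h (by positivity)
      · exact h)
  rw [hme]; exact this

lemma eq_smul_X0_pow {ρ : R2} {N : ℕ} (hh : ρ.IsHomogeneous N) (hd : pderiv 1 ρ = 0) :
    ρ = (coeff (Finsupp.single 0 N) ρ) • (X 0 ^ N * X 1 ^ 0 : R2) := by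
  ext m
  rw [coeff_smul]
  rw [pow_zero, mul_one]
  by_cases hm1 : m 1 = 0
  · by_cases hmN : m = Finsupp.single 0 N
    · subst hmN
      rw [coeff_X_pow]
      simp
    · have hco : coeff m ρ = 0 := by
        by_contra h0
        have hw := hh h0
        rw [weight_one_eq] at hw
        apply hmN
        rw [fin2_eq m, hm1]
        simp only [Finsupp.single_zero, add_zero]
        congr 1
        omega
      rw [hco, coeff_X_pow, if_neg (fun h => hmN h.symm), smul_zero]
  · rw [coeff_zero_of_pd1 hd m hm1, coeff_X_pow, if_neg, smul_zero]
    intro h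
    apply hm1
    rw [← h]
    simp

lemma pderiv_comm' (i j : Fin 2) (f : R2) :
    pderiv i (pderiv j f) = pderiv j (pderiv i f) := by
  by_cases hij : i = j
  · subst hij; rfl
  · ext m
    rw [coeff_pderiv, coeff_pderiv, coeff_pderiv, coeff_pderiv]
    have h1 : (m + Finsupp.single i 1 : Fin 2 →₀ ℕ) j = m j := by
      simp [Finsupp.single_apply, hij]
    have h2 : (m + Finsupp.single j 1 : Fin 2 →₀ ℕ) i = m i := by
      have : ¬ j = i := fun h => hij h.symm
      simp [Finsupp.single_apply, this]
    rw [h1, h2, add_right_comm m (Finsupp.single i 1) (Finsupp.single j 1)]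
    ring

lemma commute_L0_L1 : Commute L0 L1 :=
  LinearMap.ext fun f => pderiv_comm' 0 1 f

lemma commute_LF_L1 : Commute LF L1 := by
  have : Commute L1 L1 := Commute.refl _
  exact (commute_L0_L1).sub_left this

lemma isHomog_iter_pd1 {φ : R2} {n k : ℕ} (h : φ.IsHomogeneous (n + k)) :
    ((L1^k) φ).IsHomogeneous n := by
  induction k generalizing φ with
  | zero => simpa using h
  | succ k ih =>
    rw [pow_succ, Module.End.mul_apply]
    apply ih
    have h' : φ.IsHomogeneous ((n + k) + 1) := by
      have : n + (k + 1) = (n + k) + 1 := by omega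
      rwa [this] at h
    exact isHomog_pderiv h' 1

lemma isHomog_sub_smul {φ ψ : R2} {n : ℕ} (c : ℝ)
    (h1 : φ.IsHomogeneous n) (h2 : ψ.IsHomogeneous n) : (φ - c • ψ).IsHomogeneous n := by
  have h3 : (c • ψ).IsHomogeneous n := by
    rw [smul_eq_C_mul]; exact h2.C_mul c
  intro d hd
  rw [coeff_sub] at hd
  by_cases hc1 : coeff d φ = 0
  · rw [hc1, zero_sub, neg_ne_zero] at hd
    exact h3 hd
  · exact h1 hc1

set_option synthInstance.maxHeartbeats 1000000 in
lemma claim_zero (m12 m13 m23 : ℕ) (h12 : 0 < m12) (h13 : 0 < m13) (h23 : 0 < m23) :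
    ∀ q' ≤ m23 - 1, ∀ φ : R2, φ.IsHomogeneous (m12+m13+m23-2) →
      (LF^m12) ((L0^m13) φ) = 0 → (L1^q') φ = 0 → φ = 0 := by
  intro q'
  induction q' with
  | zero => intro _ φ _ _ h0; simpa using h0
  | succ q' ih =>
    intro hq' φ hh hT h1
    apply ih (by omega) φ hh hT
    set D := m12 + m13 + m23 - 2 with hD
    set ρ := (L1^q') φ with hρdef
    have hq2 : q' ≤ m23 - 2 := by omega
    have hρh : ρ.IsHomogeneous (D - q') := by
      apply isHomog_iter_pd1
      rwa [show (D - q') + q' = D by omega]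
    have hρ1 : pderiv 1 ρ = 0 := by
      have he : (L1^(q'+1)) φ = L1 ((L1^q') φ) := by rw [pow_succ', Module.End.mul_apply]
      rw [he] at h1; exact h1
    have hρe := eq_smul_X0_pow hρh hρ1
    set N := D - q' with hN
    set a := coeff (Finsupp.single 0 N) ρ with ha
    have hcomm : Commute (LF^m12 * L0^m13) (L1^q') :=
      (commute_LF_L1.pow_pow m12 q').mul_left (commute_L0_L1.pow_pow m13 q')
    have hTρ : (LF^m12) ((L0^m13) ρ) = 0 := by
      have h2 := congrFun (congrArg DFunLike.coe hcomm) φ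
      simp only [Module.End.mul_apply] at h2
      rw [hρdef, h2, hT, map_zero]
    rw [hρe, map_smul, map_smul, iter_pd0, map_nsmul] at hTρ
    have hiLF := iter_LF m12 (N - m13) 0
    rw [pow_zero] at hiLF
    rw [pow_zero, hiLF] at hTρ
    -- hTρ : a • (N.descFactorial m13 • ((N - m13).descFactorial m12 • (X0^(N-m13-m12) * 1))) = 0
    have hd1 : (N.descFactorial m13 : ℝ) ≠ 0 := by
      have : ¬ (N < m13) := by omega
      simpa [Nat.descFactorial_eq_zero_iff_lt] using this
    have hd2 : ((N - m13).descFactorial m12 : ℝ) ≠ 0 := by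
      have : ¬ (N - m13 < m12) := by omega
      simpa [Nat.descFactorial_eq_zero_iff_lt] using this
    have hpne : (X 0 ^ (N - m13 - m12) * 1 : R2) ≠ 0 := by
      rw [mul_one]
      exact pow_ne_zero _ (X_ne_zero 0)
    rw [← Nat.cast_smul_eq_nsmul ℝ (N.descFactorial m13),
      ← Nat.cast_smul_eq_nsmul ℝ ((N - m13).descFactorial m12),
      smul_smul, smul_smul, smul_eq_zero] at hTρ
    have ha0 : a = 0 := by
      rcases hTρ with h | h
      · rcases mul_eq_zero.mp h with h' | h'
        · rcases mul_eq_zero.mp h' with h'' | h''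
          · exact h''
          · exact absurd h'' hd1
        · exact absurd h' hd2
      · exact absurd h hpne
    rw [hρe, ha0, zero_smul]

def phi0 (m12 m13 m23 : ℕ) : R2 :=
  ∑ j ∈ Finset.range m23,
    (((m23-1).choose j : ℝ) / (((m12+m13+m23-2) - j).descFactorial m13 : ℝ)) •
      (X 0 ^ ((m12+m13+m23-2) - j) * X 1 ^ j)

lemma phi0_homog (m12 m13 m23 : ℕ) (h12 : 0 < m12) (h13 : 0 < m13) (h23 : 0 < m23) :
    (phi0 m12 m13 m23).IsHomogeneous (m12+m13+m23-2) := by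
  apply IsHomogeneous.sum
  intro j hj
  have hj' : j < m23 := Finset.mem_range.mp hj
  rw [smul_eq_C_mul]
  have he : ((m12+m13+m23-2) - j) + j = m12+m13+m23-2 := by omega
  have base := ((isHomogeneous_X_pow (0 : Fin 2) ((m12+m13+m23-2) - j)).mul
    (isHomogeneous_X_pow (1 : Fin 2) j)).C_mul
    (((m23-1).choose j : ℝ) / (((m12+m13+m23-2) - j).descFactorial m13 : ℝ))
  rwa [he] at base

lemma phi0_L1 (m12 m13 m23 : ℕ) : (L1^m23) (phi0 m12 m13 m23) = 0 := by
  rw [phi0, map_sum]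
  apply Finset.sum_eq_zero
  intro j hj
  have hj' : j < m23 := Finset.mem_range.mp hj
  rw [map_smul, iter_pd1, Nat.descFactorial_eq_zero_iff_lt.mpr hj', zero_smul, smul_zero]

lemma phi0_L0 (m12 m13 m23 : ℕ) (h12 : 0 < m12) (h13 : 0 < m13) (h23 : 0 < m23) :
    (L0^m13) (phi0 m12 m13 m23) = X 0 ^ (m12-1) * (X 0 + X 1) ^ (m23-1) := by
  rw [phi0, map_sum]
  have step1 : ∀ j ∈ Finset.range m23,
      (L0^m13) ((((m23-1).choose j : ℝ) / (((m12+m13+m23-2) - j).descFactorial m13 : ℝ)) •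
        (X 0 ^ ((m12+m13+m23-2) - j) * X 1 ^ j))
      = ((m23-1).choose j : ℝ) • (X 0 ^ ((m12-1) + ((m23-1) - j)) * X 1 ^ j) := by
    intro j hj
    have hj' : j < m23 := Finset.mem_range.mp hj
    have hd : ((((m12+m13+m23-2) - j)).descFactorial m13 : ℝ) ≠ 0 := by
      have : ¬ ((m12+m13+m23-2) - j < m13) := by omega
      simpa [Nat.descFactorial_eq_zero_iff_lt] using this
    have hex : (m12+m13+m23-2) - j - m13 = (m12-1) + ((m23-1) - j) := by omega
    rw [map_smul, iter_pd0, ← Nat.cast_smul_eq_nsmul ℝ, smul_smul, div_mul_cancel₀ _ hd, hex]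
  rw [Finset.sum_congr rfl step1]
  conv_rhs => rw [show (X 0 + X 1 : R2) = X 1 + X 0 from add_comm _ _, add_pow,
    show m23 - 1 + 1 = m23 by omega, Finset.mul_sum]
  apply Finset.sum_congr rfl
  intro j hj
  rw [smul_eq_C_mul, pow_add, map_natCast C ((m23-1).choose j)]
  ring

end

end RankTwoAux

open RankTwoAux

/-- Rank-2 case of Theorem 3.4(3): the homogeneous polynomial solutions of degree
`M - 2` (with `M = m₁₂ + m₁₃ + m₂₃`) of the system `∂₂^{m₂₃} φ = 0`,
`(∂₁ - ∂₂)^{m₁₂} ∂₁^{m₁₃} φ = 0` form a one-dimensional space. -/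
theorem rank_two_uniqueness (m12 m13 m23 : ℕ)
    (h12 : 0 < m12) (h13 : 0 < m13) (h23 : 0 < m23) :
    ∃ φ₀ : MvPolynomial (Fin 2) ℝ, φ₀ ≠ 0 ∧
      φ₀.IsHomogeneous (m12 + m13 + m23 - 2) ∧
      (fun p : MvPolynomial (Fin 2) ℝ => pderiv 1 p)^[m23] φ₀ = 0 ∧
      (fun p : MvPolynomial (Fin 2) ℝ => pderiv 0 p - pderiv 1 p)^[m12]
        ((fun p : MvPolynomial (Fin 2) ℝ => pderiv 0 p)^[m13] φ₀) = 0 ∧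
      ∀ φ : MvPolynomial (Fin 2) ℝ,
        φ.IsHomogeneous (m12 + m13 + m23 - 2) →
        (fun p : MvPolynomial (Fin 2) ℝ => pderiv 1 p)^[m23] φ = 0 →
        (fun p : MvPolynomial (Fin 2) ℝ => pderiv 0 p - pderiv 1 p)^[m12]
          ((fun p : MvPolynomial (Fin 2) ℝ => pderiv 0 p)^[m13] φ) = 0 →
        ∃ c : ℝ, φ = c • φ₀ := by
  have hphih := phi0_homog m12 m13 m23 h12 h13 h23
  have hphiL0 := phi0_L0 m12 m13 m23 h12 h13 h23
  have hphiL1 := phi0_L1 m12 m13 m23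
  have hphiT : (LF^m12) ((L0^m13) (phi0 m12 m13 m23)) = 0 := by
    rw [hphiL0, iter_LF, Nat.descFactorial_eq_zero_iff_lt.mpr (by omega), zero_smul]
  have hphine : phi0 m12 m13 m23 ≠ 0 := by
    intro h0
    rw [h0, map_zero] at hphiL0
    have h2 : (X 0 ^ (m12-1) * (X 0 + X 1) ^ (m23-1) : R2) ≠ 0 := by
      refine mul_ne_zero (pow_ne_zero _ (X_ne_zero 0)) (pow_ne_zero _ ?_)
      intro hs
      have h3 := congrArg (eval (fun _ => (1:ℝ))) hs
      simp at h3
    exact h2 hphiL0.symm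
  refine ⟨phi0 m12 m13 m23, hphine, hphih, ?_, ?_, ?_⟩
  · rw [iter1_eq]; exact hphiL1
  · rw [iterF_eq, iter0_eq]; exact hphiT
  · intro φ hφh hφ1 hφT
    rw [iter1_eq] at hφ1
    rw [iterF_eq, iter0_eq] at hφT
    have hsucc : m23 - 1 + 1 = m23 := by omega
    have hiterhom : ∀ ψ : R2, ψ.IsHomogeneous (m12 + m13 + m23 - 2) →
        ((L1^(m23-1)) ψ).IsHomogeneous (m12 + m13 - 1) := by
      intro ψ hψ
      apply isHomog_iter_pd1
      rwa [show (m12 + m13 - 1) + (m23 - 1) = m12 + m13 + m23 - 2 by omega]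
    have hpd1 : ∀ ψ : R2, (L1^m23) ψ = 0 → pderiv 1 ((L1^(m23-1)) ψ) = 0 := by
      intro ψ hψ
      have he : (L1^(m23-1+1)) ψ = L1 ((L1^(m23-1)) ψ) := by
        rw [pow_succ', Module.End.mul_apply]
      rw [hsucc] at he
      show L1 ((L1^(m23-1)) ψ) = 0
      rw [← he, hψ]
    have hρφe := eq_smul_X0_pow (hiterhom φ hφh) (hpd1 φ hφ1)
    have hρ0e := eq_smul_X0_pow (hiterhom _ hphih) (hpd1 _ hphiL1)
    set a : ℝ := coeff (Finsupp.single 0 (m12 + m13 - 1)) ((L1^(m23-1)) φ) with ha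
    set a0 : ℝ := coeff (Finsupp.single 0 (m12 + m13 - 1)) ((L1^(m23-1)) (phi0 m12 m13 m23))
      with ha0
    have ha0ne : a0 ≠ 0 := by
      intro h0
      apply hphine
      apply claim_zero m12 m13 m23 h12 h13 h23 (m23-1) le_rfl _ hphih hphiT
      rw [hρ0e, h0, zero_smul]
    refine ⟨a / a0, ?_⟩
    have hr : φ - (a/a0) • phi0 m12 m13 m23 = 0 := by
      apply claim_zero m12 m13 m23 h12 h13 h23 (m23-1) le_rfl _
        (isHomog_sub_smul _ hφh hphih) ?_ ?_
      · rw [map_sub, map_sub, map_smul, map_smul, hφT, hphiT, smul_zero, sub_zero]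
      · rw [map_sub, map_smul, hρφe, hρ0e, smul_smul, div_mul_cancel₀ _ ha0ne, sub_self]
    exact sub_eq_zero.mp hr
end

section
/- For positive integers m_{1,2}, m_{1,3}, m_{2,3}, the iterated residue Res_{x_1=0} Res_{x_2=0} of x_1^{m_{1,2}+m_{1,3}−1} x_2^{m_{2,3}−1} / (x_1^{m_{1,3}} x_2^{m_{2,3}} (x_1 − x_2)^{m_{1,2}}) equals 1. -/
/-!
The inner integrand equals `g(x₂) / x₂` with `g(x₂) = x₁^{m₁₂+m₁₃-1} / (x₁^{m₁₃} (x₁ - x₂)^{m₁₂})`,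
which is holomorphic on `|x₂| ≤ 1` because `|x₁| = 2`. By Cauchy's integral formula the inner
residue is `g(0) = x₁⁻¹`, whose residue at `x₁ = 0` is `1`.
-/

/-- The residue at `0` of a function `f : ℂ → ℂ`, computed as a contour integral over the
circle of radius `r` centered at `0`. -/
noncomputable def res (f : ℂ → ℂ) (r : ℝ) : ℂ :=
    (2 * Real.pi * Complex.I)⁻¹ * ∮ z in C(0, r), f z

open Complex Metric

theorem res_congr {f g : ℂ → ℂ} {r : ℝ} (hr : 0 ≤ r) (h : Set.EqOn f g (sphere 0 r)) :
    res f r = res g r := by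
  rw [res, res, circleIntegral.integral_congr hr h]

theorem res_div_eq_apply_zero {g : ℂ → ℂ} {r : ℝ} (hr : 0 < r)
    (hg : DiffContOnCl ℂ g (ball 0 r)) :
    res (fun z => g z / z) r = g 0 := by
  have h2πI : (2 * Real.pi * I : ℂ) ≠ 0 := by simp [Real.pi_ne_zero, I_ne_zero]
  have hcauchy := hg.circleIntegral_sub_inv_smul (mem_ball_self hr)
  simp only [sub_zero, smul_eq_mul] at hcauchy
  simp only [res, div_eq_inv_mul, hcauchy, ← mul_assoc, inv_mul_cancel₀ h2πI, one_mul]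

theorem res_inv {r : ℝ} (hr : 0 < r) : res (fun z => z⁻¹) r = 1 := by
  simpa only [one_div] using res_div_eq_apply_zero (g := fun _ => 1) hr diffContOnCl_const

theorem res_pow_div_sub_pow {x1 : ℂ} {r : ℝ} (hr : 0 < r) (hx1 : r < ‖x1‖)
    {m12 m13 m23 : ℕ} (hM : 0 < m12 + m13) (h23 : 0 < m23) :
    res (fun x2 =>
        x1 ^ (m12 + m13 - 1) * x2 ^ (m23 - 1) /
          (x1 ^ m13 * x2 ^ m23 * (x1 - x2) ^ m12)) r = x1⁻¹ := by
  have hx1_ne : x1 ≠ 0 := norm_pos_iff.mp (hr.trans hx1)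
  set g : ℂ → ℂ := fun x2 => x1 ^ (m12 + m13 - 1) / (x1 ^ m13 * (x1 - x2) ^ m12)
  have hsplit : Set.EqOn (fun x2 => x1 ^ (m12 + m13 - 1) * x2 ^ (m23 - 1) /
      (x1 ^ m13 * x2 ^ m23 * (x1 - x2) ^ m12)) (fun x2 => g x2 / x2) (sphere 0 r) := by
    intro x2 hx2
    have hx2_ne : x2 ≠ 0 := ne_zero_of_mem_sphere hr.ne' ⟨x2, hx2⟩
    obtain ⟨k, rfl⟩ := Nat.exists_eq_add_of_lt h23
    simp only [g, Nat.add_sub_cancel, pow_succ, zero_add]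
    rw [show x1 ^ m13 * (x2 ^ k * x2) * (x1 - x2) ^ m12
        = x2 ^ k * (x1 ^ m13 * (x1 - x2) ^ m12 * x2) by ring,
      mul_comm _ (x2 ^ k), mul_div_mul_left _ _ (pow_ne_zero _ hx2_ne), div_div]
  have hg : DiffContOnCl ℂ g (ball 0 r) := by
    refine DifferentiableOn.diffContOnCl ?_
    rw [closure_ball 0 hr.ne']
    refine (differentiableOn_const _).div (by fun_prop) fun z hz => ?_
    have hz_ne : x1 - z ≠ 0 := by
      rw [sub_ne_zero]
      rintro rfl
      exact (mem_closedBall_zero_iff.mp hz).not_gt hx1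
    exact mul_ne_zero (pow_ne_zero _ hx1_ne) (pow_ne_zero _ hz_ne)
  have hg0 : g 0 = x1⁻¹ := by
    obtain ⟨k, hk⟩ := Nat.exists_eq_add_of_lt hM
    simp only [g, sub_zero, ← pow_add, add_comm m13, hk, Nat.add_sub_cancel, zero_add,
      pow_succ, div_mul_cancel_left₀ (pow_ne_zero _ hx1_ne)]
  rw [res_congr hr.le hsplit, res_div_eq_apply_zero hr hg, hg0]

theorem iterated_residue_monomial_general (m12 m13 m23 : ℕ)
    (h12 : 0 < m12) (h23 : 0 < m23) :
    res (fun x1 => res (fun x2 =>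
        x1 ^ (m12 + m13 - 1) * x2 ^ (m23 - 1) /
          (x1 ^ m13 * x2 ^ m23 * (x1 - x2) ^ m12)) 1) 2 = 1 := by
  have hinner : Set.EqOn (fun x1 => res (fun x2 =>
      x1 ^ (m12 + m13 - 1) * x2 ^ (m23 - 1) /
        (x1 ^ m13 * x2 ^ m23 * (x1 - x2) ^ m12)) 1) (fun x1 => x1⁻¹) (sphere 0 2) :=
    fun x1 hx1 => res_pow_div_sub_pow one_pos (by rw [mem_sphere_zero_iff_norm.mp hx1]; norm_num)
      (Nat.add_pos_left h12 m13) h23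
  rw [res_congr zero_le_two hinner, res_inv two_pos]

/-- The iterated residue of
`x₁^{m₁₂+m₁₃-1} x₂^{m₂₃-1} / (x₁^{m₁₃} x₂^{m₂₃} (x₁-x₂)^{m₁₂})` equals `1`
(inner residue in `x₂` on a small circle, outer residue in `x₁` on a larger circle). -/
theorem iterated_residue_monomial (m12 m13 m23 : ℕ)
    (h12 : 0 < m12) (h13 : 0 < m13) (h23 : 0 < m23) :
    res (fun x1 => res (fun x2 =>
        x1 ^ (m12 + m13 - 1) * x2 ^ (m23 - 1) /
          (x1 ^ m13 * x2 ^ m23 * (x1 - x2) ^ m12)) 1) 2 = 1 :=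
  iterated_residue_monomial_general m12 m13 m23 h12 h23
end
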